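/- arXiv:2603.19586 — 3 statements merged into one kernel-verified Lean document; each statement's English description precedes it below -/
import Mathlib

section
/- For a bounded function f on a compact interval I and any subinterval Z of I with supremum sup_Z f and infimum inf_Z f, the variation of the function 1_Z · f (the product of f with the indicator of Z) satisfies Var(1_Z · f) ≤ Var_Z(f) + 2 · sup_Z |f|. -/
/-!
Along a monotone sequence `u`, the indices `i` with `u i ∈ Z` form an interval of `ℕ` because `Z`
is order-connected. So in the variation sum of `1_Z · f`, the increments with both ends in `Z` are
consecutive increments of `f` along points of `Z`, bounded by `Var_Z f`; the only other nonzero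
increments are the single step entering `Z` and the single step leaving it, each bounded by
`sup_Z |f|`.
-/

open Finset
open scoped ENNReal

namespace Set.OrdConnected

variable {T : Set ℕ}

theorem subsingleton_exits (hT : T.OrdConnected) : {i | i ∈ T ∧ i + 1 ∉ T}.Subsingleton := by
  have key : ∀ i j, i < j → i ∈ T → j ∈ T → i + 1 ∈ T := fun i j hij hi hj =>
    hT.out hi hj ⟨i.le_succ, hij⟩
  rintro i ⟨hi, hi'⟩ j ⟨hj, hj'⟩
  rcases lt_trichotomy i j with hij | rfl | hji
  · exact absurd (key i j hij hi hj) hi'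
  · rfl
  · exact absurd (key j i hji hj hi) hj'

theorem subsingleton_entries (hT : T.OrdConnected) : {i | i ∉ T ∧ i + 1 ∈ T}.Subsingleton := by
  have key : ∀ i j, i < j → i + 1 ∈ T → j + 1 ∈ T → j ∈ T := fun i j hij hi hj =>
    hT.out hi hj ⟨hij, j.le_succ⟩
  rintro i ⟨hi, hi'⟩ j ⟨hj, hj'⟩
  rcases lt_trichotomy i j with hij | rfl | hji
  · exact absurd (key i j hij hi' hj') hj
  · rfl
  · exact absurd (key j i hji hj' hi') hi

end Set.OrdConnected

section

variable {α E : Type*} [SeminormedAddCommGroup E]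

theorem sum_edist_of_mem_of_mem_le_eVariationOn [LinearOrder α] (f : α → E) {Z : Set α}
    [DecidablePred (· ∈ Z)] (hZ : Z.OrdConnected) {u : ℕ → α} (hu : Monotone u) (n : ℕ) :
    ∑ i ∈ (range n).filter (fun i => u i ∈ Z ∧ u (i + 1) ∈ Z), edist (f (u (i + 1))) (f (u i))
      ≤ eVariationOn f Z := by
  set A := (range n).filter (fun i => u i ∈ Z ∧ u (i + 1) ∈ Z)
  rcases A.eq_empty_or_nonempty with hA | hA
  · simp [hA]
  have hmin := (mem_filter.1 (A.min'_mem hA)).2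
  have hmax := (mem_filter.1 (A.max'_mem hA)).2
  have hsub : A ⊆ Ico (A.min' hA) (A.max' hA + 1) := fun i hi =>
    mem_Ico.2 ⟨A.min'_le i hi, Nat.lt_succ_of_le (A.le_max' i hi)⟩
  calc ∑ i ∈ A, edist (f (u (i + 1))) (f (u i))
      ≤ ∑ i ∈ Ico (A.min' hA) (A.max' hA + 1), edist (f (u (i + 1))) (f (u i)) :=
        sum_le_sum_of_subset hsub
    _ ≤ eVariationOn f Z :=
        eVariationOn.sum_le_of_monotoneOn_Icc (hu.monotoneOn _)
          fun i hi => hZ.out hmin.1 hmax.2 ⟨hu hi.1, hu hi.2⟩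

theorem edist_indicator_le {f : α → E} {Z : Set α} [DecidablePred (· ∈ Z)] {C : ℝ≥0∞} (hC : ∀ x ∈ Z, ‖f x‖ₑ ≤ C)
    (x y : α) :
    edist (Z.indicator f y) (Z.indicator f x) ≤
      (if x ∈ Z ∧ y ∈ Z then edist (f y) (f x) else 0) + (if x ∈ Z ∧ y ∉ Z then C else 0) +
        (if x ∉ Z ∧ y ∈ Z then C else 0) := by
  by_cases hx : x ∈ Z <;> by_cases hy : y ∈ Z
  · simp [hx, hy]
  · simpa [hx, hy, edist_zero_right, ← enorm_eq_nnnorm] using hC x hx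
  · simpa [hx, hy, edist_zero_left, ← enorm_eq_nnnorm] using hC y hy
  · simp [hx, hy]

theorem eVariationOn_indicator_le [LinearOrder α] (f : α → E) {Z : Set α} (hZ : Z.OrdConnected)
    (s : Set α) {C : ℝ≥0∞} (hC : ∀ x ∈ Z, ‖f x‖ₑ ≤ C) :
    eVariationOn (Z.indicator f) s ≤ eVariationOn f Z + 2 * C := by
  classical
  refine iSup_le fun ⟨n, u, hu, _⟩ => ?_
  have hT := hZ.preimage_mono hu
  have hexits : #((range n).filter fun i => u i ∈ Z ∧ u (i + 1) ∉ Z) ≤ 1 :=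
    card_le_one_iff_subsingleton.2 <| hT.subsingleton_exits.anti fun i hi => (mem_filter.1 hi).2
  have hentries : #((range n).filter fun i => u i ∉ Z ∧ u (i + 1) ∈ Z) ≤ 1 :=
    card_le_one_iff_subsingleton.2 <|
      hT.subsingleton_entries.anti fun i hi => (mem_filter.1 hi).2
  calc ∑ i ∈ range n, edist (Z.indicator f (u (i + 1))) (Z.indicator f (u i))
      ≤ ∑ i ∈ range n, ((if u i ∈ Z ∧ u (i + 1) ∈ Z then edist (f (u (i + 1))) (f (u i)) else 0)
          + (if u i ∈ Z ∧ u (i + 1) ∉ Z then C else 0)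
          + (if u i ∉ Z ∧ u (i + 1) ∈ Z then C else 0)) :=
        sum_le_sum fun i _ => edist_indicator_le hC _ _
    _ = ∑ i ∈ (range n).filter (fun i => u i ∈ Z ∧ u (i + 1) ∈ Z),
            edist (f (u (i + 1))) (f (u i))
          + #((range n).filter fun i => u i ∈ Z ∧ u (i + 1) ∉ Z) • C
          + #((range n).filter fun i => u i ∉ Z ∧ u (i + 1) ∈ Z) • C := by
        simp only [sum_add_distrib, ← sum_filter, sum_const]
    _ ≤ eVariationOn f Z + 1 • C + 1 • C := by
        gcongr
        · exact sum_edist_of_mem_of_mem_le_eVariationOn f hZ hu n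
    _ = eVariationOn f Z + 2 * C := by rw [one_nsmul, add_assoc, ← two_mul]

end

/-- Variation of `1_Z · f` is at most the variation of `f` on `Z` plus twice the sup of `|f|` on
`Z`, for `f` bounded on a compact interval `[a,b]` and `Z ⊆ [a,b]` a subinterval. -/
theorem stmt0 (a b : ℝ) (f : ℝ → ℝ) (Z : Set ℝ) (hZint : Z.OrdConnected)
    (hZ : Z ⊆ Set.Icc a b) (hbd : ∃ M : ℝ, ∀ x ∈ Set.Icc a b, |f x| ≤ M) :
    eVariationOn (Z.indicator f) (Set.Icc a b) ≤
      eVariationOn f Z + ENNReal.ofReal (2 * ⨆ x : Z, |f x.1|) := by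
  obtain ⟨M, hM⟩ := hbd
  have hbdd : BddAbove (Set.range fun x : Z => |f x.1|) :=
    ⟨M, by rintro _ ⟨x, rfl⟩; exact hM _ (hZ x.2)⟩
  have hC : ∀ x ∈ Z, ‖f x‖ₑ ≤ ENNReal.ofReal (⨆ x : Z, |f x.1|) := fun x hx => by
    rw [Real.enorm_eq_ofReal_abs]
    exact ENNReal.ofReal_le_ofReal (le_ciSup hbdd ⟨x, hx⟩)
  rw [ENNReal.ofReal_mul zero_le_two, ENNReal.ofReal_ofNat]
  exact eVariationOn_indicator_le f hZint _ hC
end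

section
/- Let Λ_a = {f ∈ BV(X) : f ≢ 0, f ≥ 0, Var(f) ≤ a·F(f)} be a cone defined by a positive linear functional F with F(1) = 1, and let c ∈ (0,1). For every f ∈ Λ_{ca}, the Hilbert metric distance in Λ_a between the constant function 1 and f satisfies Θ_{Λ_a}(1, f) ≤ log( (sup f + c·F(f)) / min{ inf f, (1−c)·F(f) } ). -/
open Filter

section Cone

variable {V : Type*} [AddCommGroup V] [Module ℝ V]

/-- The partial order induced by a cone: `f ⪯ g` iff `g - f ∈ C ∪ {0}`. -/
def coneLE (C : Set V) (f g : V) : Prop := g - f ∈ C ∪ {0}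

/-- `α(f,g) = sup {t > 0 : t·f ⪯ g}`. -/
noncomputable def coneAlpha (C : Set V) (f g : V) : ℝ :=
  sSup {t : ℝ | 0 < t ∧ coneLE C (t • f) g}

/-- `β(f,g) = inf {t > 0 : g ⪯ t·f}`. -/
noncomputable def coneBeta (C : Set V) (f g : V) : ℝ :=
  sInf {t : ℝ | 0 < t ∧ coneLE C g (t • f)}

/-- The Hilbert projective metric `Θ_C(f,g) = log (β(f,g) / α(f,g))`. -/
noncomputable def coneTheta (C : Set V) (f g : V) : ℝ :=
  Real.log (coneBeta C f g / coneAlpha C f g)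

end Cone

/-- The Birkhoff cone `Λ_a = {f : f ≢ 0, f ≥ 0 on X, Var(f) ≤ a F(f)}`. -/
def bvCone (X : Set ℝ) (F : (ℝ → ℝ) → ℝ) (a : ℝ) : Set (ℝ → ℝ) :=
  {f | (∃ x ∈ X, f x ≠ 0) ∧ (∀ x ∈ X, 0 ≤ f x) ∧ (eVariationOn f X).toReal ≤ a * F f}

private lemma evar_congr_edist {α : Type*} [LinearOrder α] {f g : α → ℝ} (s : Set α)
    (h : ∀ x y, edist (g x) (g y) = edist (f x) (f y)) :
    eVariationOn g s = eVariationOn f s := by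
  unfold eVariationOn
  exact iSup_congr fun p => Finset.sum_congr rfl fun i _ => h _ _

private lemma evar_sub_const {α : Type*} [LinearOrder α] (f : α → ℝ) (s : Set α) (A : ℝ) :
    eVariationOn (fun x => f x - A) s = eVariationOn f s := by
  apply evar_congr_edist
  intro x y
  simp only [edist_dist, Real.dist_eq]
  ring_nf

private lemma evar_const_sub {α : Type*} [LinearOrder α] (f : α → ℝ) (s : Set α) (B : ℝ) :
    eVariationOn (fun x => B - f x) s = eVariationOn f s := by
  apply evar_congr_edist
  intro x y
  simp only [edist_dist, Real.dist_eq]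
  rw [show B - f x - (B - f y) = -(f x - f y) by ring, abs_neg]

/-- For `f ∈ Λ_{ca}` with `c ∈ (0,1)`, the Hilbert distance in `Λ_a` between the constant
function `1` and `f` is at most `log((sup f + c F(f)) / min (inf f) ((1-c) F(f)))`. -/
theorem stmt8 (X : Set ℝ) (hX : X.Nonempty) (F : (ℝ → ℝ) → ℝ)
    (hFadd : ∀ f g : ℝ → ℝ, F (f + g) = F f + F g)
    (hFsmul : ∀ (t : ℝ) (f : ℝ → ℝ), F (t • f) = t * F f)
    (hFpos : ∀ f : ℝ → ℝ, (∀ x ∈ X, 0 ≤ f x) → 0 ≤ F f)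
    (hFone : F (fun _ => 1) = 1)
    (hFbetween : ∀ g : ℝ → ℝ, BoundedVariationOn g X →
      (⨅ x : X, g x.1) ≤ F g ∧ F g ≤ ⨆ x : X, g x.1)
    (a c : ℝ) (ha : 0 < a) (hc : c ∈ Set.Ioo (0 : ℝ) 1)
    (f : ℝ → ℝ) (hfBV : BoundedVariationOn f X) (hf : f ∈ bvCone X F (c * a)) :
    coneTheta (bvCone X F a) (fun _ => 1) f ≤
      Real.log (((⨆ x : X, f x.1) + c * F f) /
        min (⨅ x : X, f x.1) ((1 - c) * F f)) := by
  obtain ⟨x₀, hx₀⟩ := hX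
  have hXne : Nonempty ↥X := ⟨⟨x₀, hx₀⟩⟩
  obtain ⟨hfne, hfpos, hfvar⟩ := hf
  obtain ⟨hc0, hc1⟩ := hc
  set V : ℝ := (eVariationOn f X).toReal with hVdef
  have hsmul1 : ∀ t : ℝ, (t • (fun _ => (1:ℝ)) : ℝ → ℝ) = fun _ => t := by
    intro t; funext x; simp
  have hbddB : BddBelow (Set.range fun x : X => f x.1) := by
    refine ⟨0, ?_⟩; rintro _ ⟨x, rfl⟩; exact hfpos x x.2
  have hbddA : BddAbove (Set.range fun x : X => f x.1) := by
    refine ⟨f x₀ + V, ?_⟩; rintro _ ⟨x, rfl⟩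
    have := hfBV.sub_le x.2 hx₀
    simp only [hVdef]; linarith
  set I : ℝ := ⨅ x : X, f x.1 with hIdef
  set S : ℝ := ⨆ x : X, f x.1 with hSdef
  have hI0 : 0 ≤ I := le_ciInf fun x => hfpos x x.2
  have hIle : ∀ x ∈ X, I ≤ f x := fun x hx => ciInf_le hbddB ⟨x, hx⟩
  have hSle : ∀ x ∈ X, f x ≤ S := fun x hx => le_ciSup hbddA ⟨x, hx⟩
  have hFf0 : 0 ≤ F f := hFpos f hfpos
  obtain ⟨hbet1, hbet2⟩ := hFbetween f hfBV
  rcases hI0.lt_or_eq with hIpos | hIz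
  swap
  · -- degenerate case: inf f = 0
    have hsetA : {t : ℝ | 0 < t ∧ coneLE (bvCone X F a) (t • (fun _ => (1:ℝ))) f} = ∅ := by
      ext t
      simp only [Set.mem_setOf_eq, Set.mem_empty_iff_false, iff_false, not_and]
      intro ht hle
      rcases hle with hmem | hzero
      · obtain ⟨-, hnn, -⟩ := hmem
        have := hnn x₀ hx₀
        rw [hsmul1] at this
        simp only [Pi.sub_apply] at this
        have : t ≤ I := le_ciInf fun x => by
          have := (by
            have h := hnn x x.2
            rw [hsmul1] at h
            simpa using h : (0:ℝ) ≤ f x - t)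
          linarith
        linarith
      · have : ∀ x, f x = t := by
          intro x
          have := congrFun hzero x
          rw [hsmul1] at this
          simp only [Pi.sub_apply, Pi.zero_apply] at this
          linarith
        have : I = t := by
          rw [hIdef]
          simp only [this]
          exact ciInf_const
        linarith
    have hLHS : coneTheta (bvCone X F a) (fun _ => 1) f = 0 := by
      unfold coneTheta coneAlpha
      rw [hsetA, Real.sSup_empty, div_zero, Real.log_zero]
    have hmin : min I ((1 - c) * F f) = 0 := by
      rw [← hIz]
      exact min_eq_left (by nlinarith)
    rw [hLHS, hmin, div_zero, Real.log_zero]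
  · -- main case: inf f > 0
    have hFfpos : 0 < F f := lt_of_lt_of_le hIpos hbet1
    set A : ℝ := min I ((1 - c) * F f) with hAdef
    set B : ℝ := S + c * F f with hBdef
    have hA0 : 0 < A := lt_min hIpos (mul_pos (by linarith) hFfpos)
    have hIS : I ≤ S := (hIle x₀ hx₀).trans (hSle x₀ hx₀)
    have hSpos : 0 < S := lt_of_lt_of_le hIpos hIS
    have hB0 : 0 < B := by positivity
    have hAI : A ≤ I := min_le_left _ _
    have hAc : A ≤ (1 - c) * F f := min_le_right _ _
    -- A · 1 ⪯ f
    have hAmem : A ∈ {t : ℝ | 0 < t ∧ coneLE (bvCone X F a) (t • (fun _ => (1:ℝ))) f} := by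
      refine ⟨hA0, ?_⟩
      left
      have heq : f - A • (fun _ => (1:ℝ)) = fun x => f x - A := by
        rw [hsmul1]; funext x; simp
      rw [heq]
      have hFg : F (fun x => f x - A) = F f - A := by
        have : (fun x => f x - A) = f + (-A) • (fun _ => (1:ℝ)) := by
          rw [hsmul1]; funext x; simp; ring
        rw [this, hFadd, hFsmul, hFone]; ring
      refine ⟨?_, ?_, ?_⟩
      · -- not identically zero on X
        by_contra hcon
        push_neg at hcon
        have hconst : ∀ x ∈ X, f x = A := by
          intro x hx
          have := hcon x hx
          linarith [sub_eq_zero.mp (not_not.mp (by simpa using this))]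
        have hIA : I = A := by
          rw [hIdef]
          have : (fun x : X => f x.1) = fun _ : X => A := funext fun x => hconst x x.2
          rw [this]; exact ciInf_const
        have hSA : S = A := by
          rw [hSdef]
          have : (fun x : X => f x.1) = fun _ : X => A := funext fun x => hconst x x.2
          rw [this]; exact ciSup_const
        have hFA : F f = A := le_antisymm (hSA ▸ hbet2) (hIA ▸ hbet1)
        rw [hFA] at hAc
        nlinarith
      · intro x hx
        show 0 ≤ f x - A
        have := hIle x hx
        linarith
      · rw [evar_sub_const, hFg]
        have : V ≤ c * a * F f := hfvar
        nlinarith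
    -- f ⪯ B · 1
    have hBmem : B ∈ {t : ℝ | 0 < t ∧ coneLE (bvCone X F a) f (t • (fun _ => (1:ℝ)))} := by
      refine ⟨hB0, ?_⟩
      left
      have heq : B • (fun _ => (1:ℝ)) - f = fun x => B - f x := by
        rw [hsmul1]; funext x; simp
      rw [heq]
      have hFg : F (fun x => B - f x) = B - F f := by
        have : (fun x => B - f x) = (fun _ => B) + (-1 : ℝ) • f := by
          funext x; simp; ring
        rw [this, hFadd, hFsmul]
        have : (fun _ : ℝ => B) = B • (fun _ => (1:ℝ)) := (hsmul1 B).symm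
        rw [this, hFsmul, hFone]; ring
      refine ⟨?_, ?_, ?_⟩
      · by_contra hcon
        push_neg at hcon
        have hconst : ∀ x ∈ X, f x = B := by
          intro x hx
          have := hcon x hx
          linarith [sub_eq_zero.mp (not_not.mp (by simpa using this))]
        have : S = B := by
          rw [hSdef]
          have : (fun x : X => f x.1) = fun _ : X => B := funext fun x => hconst x x.2
          rw [this]; exact ciSup_const
        nlinarith
      · intro x hx
        show 0 ≤ B - f x
        have := hSle x hx
        have : f x ≤ B := by rw [hBdef]; nlinarith
        linarith
      · rw [evar_const_sub, hFg]
        have h1 : V ≤ c * a * F f := hfvar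
        have h2 : F f ≤ S := hbet2
        rw [hBdef]
        nlinarith
    -- bounds on α and β
    have hαge : A ≤ coneAlpha (bvCone X F a) (fun _ => 1) f := by
      apply le_csSup _ hAmem
      refine ⟨f x₀, ?_⟩
      rintro t ⟨ht0, hle⟩
      rcases hle with hmem | hzero
      · obtain ⟨-, hnn, -⟩ := hmem
        have h := hnn x₀ hx₀
        rw [hsmul1] at h
        simp only [Pi.sub_apply] at h
        linarith
      · have := congrFun hzero x₀
        rw [hsmul1] at this
        simp only [Pi.sub_apply, Pi.zero_apply] at this
        linarith
    have hβle : coneBeta (bvCone X F a) (fun _ => 1) f ≤ B := by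
      apply csInf_le _ hBmem
      exact ⟨0, fun t ht => le_of_lt ht.1⟩
    have hβge : I ≤ coneBeta (bvCone X F a) (fun _ => 1) f := by
      apply le_csInf ⟨B, hBmem⟩
      rintro t ⟨ht0, hle⟩
      rcases hle with hmem | hzero
      · obtain ⟨-, hnn, -⟩ := hmem
        have h := hnn x₀ hx₀
        rw [hsmul1] at h
        simp only [Pi.sub_apply] at h
        have := hIle x₀ hx₀
        linarith
      · have := congrFun hzero x₀
        rw [hsmul1] at this
        simp only [Pi.sub_apply, Pi.zero_apply] at this
        have := hIle x₀ hx₀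
        linarith
    set α := coneAlpha (bvCone X F a) (fun _ => 1) f
    set β := coneBeta (bvCone X F a) (fun _ => 1) f
    have hαpos : 0 < α := lt_of_lt_of_le hA0 hαge
    have hβpos : 0 < β := lt_of_lt_of_le hIpos hβge
    have hdiv : β / α ≤ B / A :=
      div_le_div₀ hB0.le hβle hA0 hαge
    unfold coneTheta
    exact Real.log_le_log (by positivity) hdiv
end

section
/- Let (Ω, P, θ) be ergodic, T the skew product T(ω,x) = (θω, T_ω x), and μ a T-invariant probability measure with disintegration {μ_ω}. Suppose there is exponential decay of correlations: for all f ∈ BV_Ω(I) and g ∈ L¹(μ), |μ_ω(f_ω · (g_{θⁿω} ∘ T_ω^n)) − μ_ω(f_ω)·μ_{θⁿω}(g_{θⁿω})| ≤ D(ω)·‖f_ω‖_BV·‖g_{θⁿω}‖_{L¹}·κⁿ for κ ∈ (0,1) and finite measurable D. Then every T-invariant measurable set A ⊆ Ω × I satisfies μ(A) ∈ {0, 1}; i.e., μ is ergodic. -/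
/-!
Apply decay of correlations to `f = 1_{[c,∞)}`, which has bounded variation, and to the centred
observable `g_ω = 1_{A_ω} - μ_ω(A_ω)`, which has mean zero. Invariance of `A` turns the
correlation at every time `n` into `μ_ω([c,∞) ∩ A_ω) - μ_ω(A_ω) μ_ω([c,∞))`, a quantity
independent of `n` and `O(κⁿ)`, hence zero. So `A_ω` is independent of every half-line, hence
of itself, and `μ_ω(A_ω) ∈ {0, 1}`. This function of `ω` is `θ`-invariant, so ergodicity of `θ`
makes it a.e. constant.
-/

open MeasureTheory Filter

/-- Fiberwise iterates of a skew product: `T_ω^0 = id`, `T_ω^{n+1} = T_{θω}^n ∘ T_ω`. -/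
def iterT {Ω : Type*} (θ : Ω → Ω) (T : Ω → ℝ → ℝ) : ℕ → Ω → ℝ → ℝ
  | 0, _ => id
  | n + 1, ω => iterT θ T n (θ ω) ∘ T ω

/-- The `BV` norm `‖f‖_BV = ‖f‖_∞ + Var(f)` on the interval `[a,b]`. -/
noncomputable def bvNorm (a b : ℝ) (f : ℝ → ℝ) : ℝ :=
  (⨆ x : Set.Icc a b, |f x.1|) + (eVariationOn f (Set.Icc a b)).toReal

open Set ProbabilityTheory

lemma bvNorm_nonneg (a b : ℝ) (f : ℝ → ℝ) : 0 ≤ bvNorm a b f :=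
  add_nonneg (Real.iSup_nonneg fun _ => abs_nonneg _) ENNReal.toReal_nonneg

lemma monotone_indicator_Ici_one (c : ℝ) : Monotone ((Ici c).indicator (1 : ℝ → ℝ)) := by
  intro x y hxy
  by_cases hx : c ≤ x
  · simp [hx, hx.trans hxy]
  · simp only [indicator_apply, mem_Ici, hx, if_false]
    exact indicator_nonneg (fun _ _ => zero_le_one) y

lemma boundedVariationOn_indicator_Ici (c : ℝ) (s : Set ℝ) :
    BoundedVariationOn ((Ici c).indicator (1 : ℝ → ℝ)) s :=
  ((monotone_indicator_Ici_one c).monotoneOn s).boundedVariationOn (C := 1) fun x _ => by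
    by_cases hx : c ≤ x <;> simp [hx]

lemma eq_zero_of_abs_le_mul_pow {x C r : ℝ} (hr₀ : 0 ≤ r) (hr₁ : r < 1)
    (h : ∀ n : ℕ, |x| ≤ C * r ^ n) : x = 0 := by
  have hlim : Tendsto (fun n : ℕ => C * r ^ n) atTop (nhds 0) := by
    simpa using (tendsto_pow_atTop_nhds_zero_of_lt_one hr₀ hr₁).const_mul C
  exact abs_nonpos_iff.1 (ge_of_tendsto' hlim h)

lemma abs_indicator_one_sub_le {α : Type*} {t : Set α} {p : ℝ} (hp₀ : 0 ≤ p) (hp₁ : p ≤ 1)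
    (x : α) : |t.indicator (1 : α → ℝ) x - p| ≤ 1 := by
  by_cases hx : x ∈ t <;> simp [hx, abs_le] <;> constructor <;> linarith

section CenteredIndicator

variable {α β : Type*} [MeasurableSpace α] {ν : Measure α} {s t : Set α}
  [IsProbabilityMeasure ν]

lemma integral_indicator_one_sub_measureReal (ht : MeasurableSet t) :
    ∫ x, (t.indicator 1 x - ν.real t) ∂ν = 0 := by
  rw [integral_sub ((integrable_const 1).indicator ht) (integrable_const _),
    integral_indicator_one ht, integral_const, probReal_univ, one_smul, sub_self]

lemma integral_abs_indicator_one_sub_measureReal_le :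
    ∫ x, |t.indicator 1 x - ν.real t| ∂ν ≤ 1 := by
  calc ∫ x, |t.indicator 1 x - ν.real t| ∂ν ≤ ∫ _, (1 : ℝ) ∂ν :=
        integral_mono_of_nonneg (ae_of_all _ fun _ => abs_nonneg _) (integrable_const 1)
          (ae_of_all _ (abs_indicator_one_sub_le measureReal_nonneg measureReal_le_one))
    _ = 1 := by simp

lemma integral_indicator_one_mul_indicator_one_comp_sub (hs : MeasurableSet s)
    (ht : MeasurableSet t) {F : α → β} {t' : Set β} (hF : F ⁻¹' t' = t) (r : ℝ) :
    ∫ x, s.indicator 1 x * (t'.indicator 1 (F x) - r) ∂ν = ν.real (s ∩ t) - r * ν.real s := by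
  have hpt : ∀ x, s.indicator (1 : α → ℝ) x * (t'.indicator 1 (F x) - r)
      = (s ∩ t).indicator 1 x - r * s.indicator 1 x := by
    intro x
    rw [← indicator_comp_right F (g := 1), hF, Pi.one_comp, inter_indicator_one, Pi.mul_apply]
    ring
  have hint : ∀ {u : Set α}, MeasurableSet u → Integrable (u.indicator (1 : α → ℝ)) ν :=
    fun hu => (integrable_const (1 : ℝ)).indicator hu
  simp_rw [hpt]
  rw [integral_sub (hint (hs.inter ht)) ((hint hs).const_mul r), integral_const_mul,
    integral_indicator_one (hs.inter ht), integral_indicator_one hs]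

end CenteredIndicator

lemma measure_eq_zero_or_one_of_forall_Ici_inter {ν : Measure ℝ} [IsProbabilityMeasure ν]
    {s : Set ℝ} (hs : MeasurableSet s) (h : ∀ c, ν (Ici c ∩ s) = ν s * ν (Ici c)) :
    ν s = 0 ∨ ν s = 1 := by
  have hrestrict : ν.restrict s = ν s • ν :=
    Measure.ext_of_Ici _ _ fun c => by
      rw [Measure.restrict_apply measurableSet_Ici, h c, Measure.smul_apply, smul_eq_mul]
  refine measure_eq_zero_or_one_of_indepSet_self ((indepSet_iff_measure_inter_eq_mul hs hs ν).2 ?_)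
  simpa [Measure.restrict_apply hs] using congrArg (· s) hrestrict

lemma measureReal_eq_zero_or_one_of_forall_Ici_inter {ν : Measure ℝ} [IsProbabilityMeasure ν]
    {s : Set ℝ} (hs : MeasurableSet s) (h : ∀ c, ν.real (Ici c ∩ s) = ν.real s * ν.real (Ici c)) :
    ν.real s = 0 ∨ ν.real s = 1 := by
  have h' : ∀ c, ν (Ici c ∩ s) = ν s * ν (Ici c) := fun c => by
    rw [← ENNReal.toReal_eq_toReal_iff' (measure_ne_top _ _)
      (ENNReal.mul_ne_top (measure_ne_top _ _) (measure_ne_top _ _)), ENNReal.toReal_mul]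
    exact h c
  rcases measure_eq_zero_or_one_of_forall_Ici_inter hs h' with h0 | h1
  · left; simp [measureReal_def, h0]
  · right; simp [measureReal_def, h1]

theorem Ergodic.integral_mem_of_comp_eq {α : Type*} [MeasurableSpace α] {f : α → α}
    {μ : Measure α} [IsProbabilityMeasure μ] (hf : Ergodic f μ) {g : α → ℝ} (hg : g ∘ f = g)
    {s : Set ℝ} (h₀ : (0 : ℝ) ∈ s) (hs : ∀ x, g x ∈ s) : ∫ x, g x ∂μ ∈ s := by
  by_cases hint : Integrable g μ
  · obtain ⟨c, hc⟩ := hf.ae_eq_const_of_ae_eq_comp_ae hint.1 (EventuallyEq.of_eq hg)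
    obtain ⟨x, hx⟩ := hc.exists
    simp only [integral_congr_ae hc, Function.const_apply, integral_const, probReal_univ, one_smul]
    rw [← show g x = c from hx]
    exact hs x
  · -- a non-integrable `g` has integral `0`
    rwa [integral_undef hint]

def HasDecayOfCorrelations {Ω : Type*} (θ : Ω → Ω) (T : Ω → ℝ → ℝ) (μ : Ω → Measure ℝ) (a b : ℝ)
    (D : Ω → ℝ) (κ : ℝ) : Prop :=
  ∀ f : Ω → ℝ → ℝ, (∀ ω, BoundedVariationOn (f ω) (Set.Icc a b)) →
    ∀ g : Ω → ℝ → ℝ, (∀ ω, Integrable (g ω) (μ ω)) →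
    ∀ ω (n : ℕ),
      |(∫ x, f ω x * g (θ^[n] ω) (iterT θ T n ω x) ∂μ ω)
          - (∫ x, f ω x ∂μ ω) * (∫ x, g (θ^[n] ω) x ∂μ (θ^[n] ω))|
        ≤ D ω * bvNorm a b (f ω) * (∫ x, |g (θ^[n] ω) x| ∂μ (θ^[n] ω)) * κ ^ n

section SkewProduct

variable {Ω : Type*} {θ : Ω → Ω} {T : Ω → ℝ → ℝ}

lemma preimage_iterT {A : Ω → Set ℝ} (hA : ∀ ω, T ω ⁻¹' A (θ ω) = A ω) (n : ℕ) (ω : Ω) :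
    iterT θ T n ω ⁻¹' A (θ^[n] ω) = A ω := by
  induction n generalizing ω with
  | zero => rfl
  | succ n ih =>
    rw [Function.iterate_succ_apply, iterT, preimage_comp, ih, hA]

lemma measureReal_Ici_inter_eq_mul_of_decay {μ : Ω → Measure ℝ}
    [∀ ω, IsProbabilityMeasure (μ ω)] {a b : ℝ} {D : Ω → ℝ} {κ : ℝ} {A : Ω → Set ℝ}
    (hA : ∀ ω, MeasurableSet (A ω)) (hAinv : ∀ ω, T ω ⁻¹' A (θ ω) = A ω)
    (hμA : ∀ ω, (μ (θ ω)).real (A (θ ω)) = (μ ω).real (A ω)) (hD : ∀ ω, 0 < D ω)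
    (hκ : κ ∈ Ioo (0 : ℝ) 1) (hdecay : HasDecayOfCorrelations θ T μ a b D κ) (ω : Ω) (c : ℝ) :
    (μ ω).real (Ici c ∩ A ω) = (μ ω).real (A ω) * (μ ω).real (Ici c) := by
  have hμA_iter : ∀ n, (μ (θ^[n] ω)).real (A (θ^[n] ω)) = (μ ω).real (A ω) := fun n =>
    congrFun (Function.iterate_invariant (g := fun ω => (μ ω).real (A ω)) (funext hμA) n) ω
  set f : Ω → ℝ → ℝ := fun _ => (Ici c).indicator 1
  set g : Ω → ℝ → ℝ := fun ω x => (A ω).indicator 1 x - (μ ω).real (A ω)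
  have hg : ∀ ω, Integrable (g ω) (μ ω) := fun ω =>
    ((integrable_const 1).indicator (hA ω)).sub (integrable_const _)
  refine sub_eq_zero.1 (eq_zero_of_abs_le_mul_pow (C := D ω * bvNorm a b (f ω)) hκ.1.le hκ.2
    fun n => ?_)
  have hcorr := hdecay f (fun _ => boundedVariationOn_indicator_Ici c _) g hg ω n
  rw [integral_indicator_one_sub_measureReal (hA _), mul_zero, sub_zero] at hcorr
  have hcorr_eq : ∫ x, f ω x * g (θ^[n] ω) (iterT θ T n ω x) ∂μ ω
      = (μ ω).real (Ici c ∩ A ω) - (μ ω).real (A ω) * (μ ω).real (Ici c) := by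
    simp only [f, g, hμA_iter n]
    exact integral_indicator_one_mul_indicator_one_comp_sub measurableSet_Ici (hA ω)
      (preimage_iterT hAinv n ω) _
  have hDf : 0 ≤ D ω * bvNorm a b (f ω) := mul_nonneg (hD ω).le (bvNorm_nonneg _ _ _)
  calc _ = |∫ x, f ω x * g (θ^[n] ω) (iterT θ T n ω x) ∂μ ω| := by rw [hcorr_eq]
    _ ≤ D ω * bvNorm a b (f ω) * (∫ x, |g (θ^[n] ω) x| ∂μ (θ^[n] ω)) * κ ^ n := hcorr
    _ ≤ D ω * bvNorm a b (f ω) * 1 * κ ^ n :=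
      mul_le_mul_of_nonneg_right (mul_le_mul_of_nonneg_left
        integral_abs_indicator_one_sub_measureReal_le hDf) (pow_nonneg hκ.1.le n)
    _ = D ω * bvNorm a b (f ω) * κ ^ n := by rw [mul_one]

end SkewProduct

theorem stmt19_general {Ω : Type*} [MeasurableSpace Ω] (P : Measure Ω) [IsProbabilityMeasure P]
    (θ : Ω → Ω) (hθ : Ergodic θ P)
    (a b : ℝ)
    (T : Ω → ℝ → ℝ)
    (μ : Ω → Measure ℝ) (hprob : ∀ ω, IsProbabilityMeasure (μ ω))
    (hTinv : ∀ ω (s : Set ℝ), MeasurableSet s → μ ω (T ω ⁻¹' s) = μ (θ ω) s)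
    (D : Ω → ℝ) (hD : ∀ ω, 0 < D ω) (κ : ℝ) (hκ : κ ∈ Set.Ioo (0 : ℝ) 1)
    (hdecay : ∀ f : Ω → ℝ → ℝ, (∀ ω, BoundedVariationOn (f ω) (Set.Icc a b)) →
      ∀ g : Ω → ℝ → ℝ, (∀ ω, Integrable (g ω) (μ ω)) →
      ∀ ω (n : ℕ),
        |(∫ x, f ω x * g (θ^[n] ω) (iterT θ T n ω x) ∂μ ω)
            - (∫ x, f ω x ∂μ ω) * (∫ x, g (θ^[n] ω) x ∂μ (θ^[n] ω))|
          ≤ D ω * bvNorm a b (f ω) * (∫ x, |g (θ^[n] ω) x| ∂μ (θ^[n] ω)) * κ ^ n) :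
    ∀ A : Set (Ω × ℝ), MeasurableSet A →
      (∀ ω, T ω ⁻¹' {x | (θ ω, x) ∈ A} = {x | (ω, x) ∈ A}) →
      (∫ ω, (μ ω {x | (ω, x) ∈ A}).toReal ∂P = 0 ∨
        ∫ ω, (μ ω {x | (ω, x) ∈ A}).toReal ∂P = 1) := by
  intro A hA hAinv
  set Aω : Ω → Set ℝ := fun ω => {x | (ω, x) ∈ A}
  have hAω : ∀ ω, MeasurableSet (Aω ω) := fun ω => measurable_prodMk_left hA
  have hμA : ∀ ω, (μ (θ ω)).real (Aω (θ ω)) = (μ ω).real (Aω ω) := fun ω => by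
    rw [measureReal_def, measureReal_def, ← hTinv ω _ (hAω (θ ω)), hAinv ω]
  have h01 : ∀ ω, (μ ω).real (Aω ω) ∈ ({0, 1} : Set ℝ) := fun ω =>
    measureReal_eq_zero_or_one_of_forall_Ici_inter (hAω ω) fun c =>
      measureReal_Ici_inter_eq_mul_of_decay hAω hAinv hμA hD hκ hdecay ω c
  exact hθ.integral_mem_of_comp_eq (g := fun ω => (μ ω).real (Aω ω)) (funext hμA) (by simp) h01

/-- Proposition 6.46: exponential decay of correlations forces ergodicity of the invariant
random measure `μ`: every `T`-invariant measurable set `A ⊆ Ω × [a,b]` has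
`μ(A) = ∫ μ_ω(A_ω) dP ∈ {0,1}`. -/
theorem stmt19 {Ω : Type*} [MeasurableSpace Ω] (P : Measure Ω) [IsProbabilityMeasure P]
    (θ : Ω → Ω) (hθ : Ergodic θ P) (hbij : Function.Bijective θ)
    (a b : ℝ) (hab : a ≤ b)
    (T : Ω → ℝ → ℝ) (hTmeas : ∀ ω, Measurable (T ω))
    (μ : Ω → Measure ℝ) (hprob : ∀ ω, IsProbabilityMeasure (μ ω))
    (hsupp : ∀ ω, μ ω (Set.Icc a b)ᶜ = 0)
    (hmeasμ : ∀ s : Set ℝ, MeasurableSet s → Measurable fun ω => (μ ω s).toReal)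
    (hTinv : ∀ ω (s : Set ℝ), MeasurableSet s → μ ω (T ω ⁻¹' s) = μ (θ ω) s)
    (D : Ω → ℝ) (hD : ∀ ω, 0 < D ω) (κ : ℝ) (hκ : κ ∈ Set.Ioo (0 : ℝ) 1)
    (hdecay : ∀ f : Ω → ℝ → ℝ, (∀ ω, BoundedVariationOn (f ω) (Set.Icc a b)) →
      ∀ g : Ω → ℝ → ℝ, (∀ ω, Integrable (g ω) (μ ω)) →
      ∀ ω (n : ℕ),
        |(∫ x, f ω x * g (θ^[n] ω) (iterT θ T n ω x) ∂μ ω)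
            - (∫ x, f ω x ∂μ ω) * (∫ x, g (θ^[n] ω) x ∂μ (θ^[n] ω))|
          ≤ D ω * bvNorm a b (f ω) * (∫ x, |g (θ^[n] ω) x| ∂μ (θ^[n] ω)) * κ ^ n) :
    ∀ A : Set (Ω × ℝ), MeasurableSet A →
      (∀ ω, T ω ⁻¹' {x | (θ ω, x) ∈ A} = {x | (ω, x) ∈ A}) →
      (∫ ω, (μ ω {x | (ω, x) ∈ A}).toReal ∂P = 0 ∨
        ∫ ω, (μ ω {x | (ω, x) ∈ A}).toReal ∂P = 1) :=
  stmt19_general P θ hθ a b T μ hprob hTinv D hD κ hκ hdecay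
end
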